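/- Consider a star graph with center v_0 and leaves t_1, …, t_n, where the edge {v_0, t_i} has positive integer weight γ_i, and let d_1, …, d_n be deadlines. There exists a walk starting at v_0 that visits each leaf t_i within time d_i if and only if for some (equivalently, every) permutation τ of {1,…,n} ordering the leaves by nondecreasing values of d_i + γ_i it holds that γ_{τ(k)} + 2·Σ_{j<k} γ_{τ(j)} ≤ d_{τ(k)} for every k ∈ {1,…,n}. (Theorem: if the maximal covering route covering all the targets exists on a SIMPLE-STAR instance, the Earliest Due Date order — by d_i + γ_i — yields it, in polynomial time.) -/

import Mathlib

open Finset

/-!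
A walk from the center that has visited a set `S` of leaves by time `T` and now stands at
distance `δ` from the center satisfies `2 * ∑ i ∈ S, γ i ≤ T + δ`: every visited leaf costs a
full round trip, except the current one, which costs only the way out. Applied at the moment
the last of the first `k + 1` leaves of an Earliest Due Date order is visited, and using that
`d + γ` increases along that order, this gives `γ_{τ k} + 2 * ∑_{j < k} γ_{τ j} ≤ d_{τ k}`.
Conversely, round trips to the leaves in the order `τ` reach `τ k` exactly at time
`γ_{τ k} + 2 * ∑_{j < k} γ_{τ j}`.
-/

/-- `StarStep n γ u v c` holds iff `{u, v}` is an edge of weight `c` of the star graph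
with center `none` and leaves `some i` at distance `γ i` from the center. -/
inductive StarStep (n : ℕ) (γ : Fin n → ℕ) : Option (Fin n) → Option (Fin n) → ℕ → Prop
  | out (i : Fin n) : StarStep n γ none (some i) (γ i)
  | back (i : Fin n) : StarStep n γ (some i) none (γ i)

theorem StarStep.out_or_back {n : ℕ} {γ : Fin n → ℕ} {a b : Option (Fin n)} {w : ℕ}
    (h : StarStep n γ a b w) :
    (∃ i, a = none ∧ b = some i ∧ w = γ i) ∨ (∃ i, a = some i ∧ b = none ∧ w = γ i) := by
  cases h with
  | out i => exact .inl ⟨i, rfl, rfl, rfl⟩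
  | back i => exact .inr ⟨i, rfl, rfl, rfl⟩

/-- `x j` is the vertex reached after `j` steps, at time `∑ l ∈ range j, c l`. -/
def ExistsTimelyWalk (n : ℕ) (γ : Fin n → ℕ) (d : Fin n → ℕ) : Prop :=
  ∃ (m : ℕ) (x : ℕ → Option (Fin n)) (c : ℕ → ℕ),
    x 0 = none ∧
    (∀ j < m, StarStep n γ (x j) (x (j + 1)) (c j)) ∧
    (∀ i : Fin n, ∃ j ≤ m, x j = some i ∧ (∑ l ∈ Finset.range j, c l) ≤ d i)

section LowerBound

variable {n m : ℕ} {γ : Fin n → ℕ} {x : ℕ → Option (Fin n)} {c : ℕ → ℕ}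

theorem two_mul_sum_le_sum_range_add (h0 : x 0 = none)
    (hstep : ∀ j < m, StarStep n γ (x j) (x (j + 1)) (c j)) {J : ℕ} (hJ : J ≤ m)
    {S : Finset (Fin n)} (hS : ∀ i ∈ S, ∃ l ≤ J, x l = some i) :
    2 * ∑ i ∈ S, γ i ≤ ∑ l ∈ range J, c l + (x J).elim 0 γ := by
  induction J generalizing S with
  | zero =>
    have hS0 : S = ∅ := eq_empty_of_forall_notMem fun i hi => by
      obtain ⟨l, hl, hxl⟩ := hS i hi
      obtain rfl := Nat.le_zero.mp hl
      simp [h0] at hxl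
    simp [hS0, h0]
  | succ J ih =>
    have visited_before {i : Fin n} (hi : i ∈ S) (hne : x (J + 1) ≠ some i) :
        ∃ l ≤ J, x l = some i := by
      obtain ⟨l, hl, hxl⟩ := hS i hi
      rcases Nat.le_succ_iff.mp hl with hl | rfl
      exacts [⟨l, hl, hxl⟩, absurd hxl hne]
    rw [sum_range_succ]
    rcases (hstep J (by omega)).out_or_back with ⟨i, ha, hb, hc⟩ | ⟨i, ha, hb, hc⟩
    · have hprev := ih (by omega) (S := S.erase i) fun i' hi' =>
        visited_before (mem_of_mem_erase hi') (by simpa [hb] using (ne_of_mem_erase hi').symm)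
      have hsplit : ∑ i' ∈ S, γ i' ≤ ∑ i' ∈ S.erase i, γ i' + γ i :=
        calc ∑ i' ∈ S, γ i' ≤ ∑ i' ∈ insert i (S.erase i), γ i' :=
              sum_le_sum_of_subset (insert_erase_subset i S)
          _ = ∑ i' ∈ S.erase i, γ i' + γ i := by
              rw [sum_insert (notMem_erase i S), add_comm]
      simp only [ha, hb, hc, Option.elim] at hprev ⊢
      omega
    · have hprev := ih (by omega) fun i' hi' => visited_before hi' (by simp [hb])
      simp only [ha, hb, hc, Option.elim] at hprev ⊢
      omega

theorem exists_mem_two_mul_sum_le_add (h0 : x 0 = none)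
    (hstep : ∀ j < m, StarStep n γ (x j) (x (j + 1)) (c j)) {d : Fin n → ℕ}
    (hvisit : ∀ i : Fin n, ∃ j ≤ m, x j = some i ∧ ∑ l ∈ range j, c l ≤ d i)
    {S : Finset (Fin n)} (hS : S.Nonempty) : ∃ i ∈ S, 2 * ∑ i' ∈ S, γ i' ≤ d i + γ i := by
  choose s hsm hsx hsd using hvisit
  obtain ⟨i, hi, hlast⟩ := S.exists_max_image s hS
  refine ⟨i, hi, ?_⟩
  have hbound := two_mul_sum_le_sum_range_add h0 hstep (hsm i) fun i' hi' =>
    ⟨s i', hlast i' hi', hsx i'⟩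
  rw [hsx i] at hbound
  exact hbound.trans (Nat.add_le_add_right (hsd i) _)

theorem ExistsTimelyWalk.edd_bound {d : Fin n → ℕ} (hw : ExistsTimelyWalk n γ d)
    (τ : Equiv.Perm (Fin n)) (hτ : Monotone fun k => d (τ k) + γ (τ k)) (k : Fin n) :
    γ (τ k) + 2 * ∑ j ∈ Iio k, γ (τ j) ≤ d (τ k) := by
  obtain ⟨m, x, c, h0, hstep, hvisit⟩ := hw
  obtain ⟨i, hi, hbound⟩ := exists_mem_two_mul_sum_le_add h0 hstep hvisit
    (S := (Iic k).map τ.toEmbedding) ⟨τ k, mem_map_of_mem _ (mem_Iic.mpr le_rfl)⟩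
  obtain ⟨j, hjk, rfl⟩ := mem_map.mp hi
  rw [sum_map, ← Iio_insert, sum_insert notMem_Iio_self] at hbound
  have hsorted := hτ (mem_Iic.mp hjk)
  simp only [Equiv.coe_toEmbedding] at hbound hsorted
  omega

end LowerBound

section RoundTrip

theorem sum_range_two_mul_add_one_div_two (g : ℕ → ℕ) (q : ℕ) :
    ∑ l ∈ range (2 * q + 1), g (l / 2) = g q + 2 * ∑ p ∈ range q, g p := by
  induction q with
  | zero => simp
  | succ q ih =>
    rw [show 2 * (q + 1) + 1 = 2 * q + 1 + 1 + 1 by ring, sum_range_succ, sum_range_succ, ih,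
      sum_range_succ, show (2 * q + 1) / 2 = q by omega, show (2 * q + 1 + 1) / 2 = q + 1 by omega]
    ring

variable {n k : ℕ} (γ : Fin n → ℕ) (σ : Fin k → Fin n)

/-- Out to `σ 0` and back, out to `σ 1` and back, and so on. -/
def roundTrip (j : ℕ) : Option (Fin n) :=
  if j % 2 = 1 then (List.ofFn σ)[j / 2]? else none

def roundTripCost (j : ℕ) : ℕ :=
  ((List.ofFn σ)[j / 2]?).elim 0 γ

theorem roundTrip_two_mul_add_one (q : Fin k) : roundTrip σ (2 * q + 1) = some (σ q) := by
  simp [roundTrip, show (2 * (q : ℕ) + 1) / 2 = q by omega]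

theorem starStep_roundTrip {j : ℕ} (hj : j < 2 * k) :
    StarStep n γ (roundTrip σ j) (roundTrip σ (j + 1)) (roundTripCost γ σ j) := by
  have hleaf : (List.ofFn σ)[j / 2]? = some (σ ⟨j / 2, by omega⟩) := by simp; omega
  rcases Nat.mod_two_eq_zero_or_one j with hj2 | hj2
  · have hnext : (j + 1) % 2 = 1 ∧ (j + 1) / 2 = j / 2 := by omega
    simp only [roundTrip, roundTripCost, hj2, hnext, hleaf]
    exact .out _
  · have hnext : (j + 1) % 2 = 0 := by omega
    simp only [roundTrip, roundTripCost, hj2, hnext, hleaf]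
    exact .back _

theorem sum_range_roundTripCost (q : Fin k) :
    ∑ l ∈ range (2 * q + 1), roundTripCost γ σ l = γ (σ q) + 2 * ∑ p ∈ Iio q, γ (σ p) := by
  set g : ℕ → ℕ := fun p => ((List.ofFn σ)[p]?).elim 0 γ
  have hg (p : Fin k) : g p = γ (σ p) := by simp [g]
  have hIio : ∑ p ∈ Iio q, γ (σ p) = ∑ p ∈ range q, g p := by
    rw [← Nat.Iio_eq_range, ← Fin.map_valEmbedding_Iio, sum_map]
    exact sum_congr rfl fun p _ => (hg p).symm
  rw [hIio, ← hg]
  exact sum_range_two_mul_add_one_div_two g q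

end RoundTrip

theorem existsTimelyWalk_of_bound {n : ℕ} {γ d : Fin n → ℕ} (τ : Equiv.Perm (Fin n))
    (hτ : ∀ k : Fin n, γ (τ k) + 2 * ∑ j ∈ Iio k, γ (τ j) ≤ d (τ k)) :
    ExistsTimelyWalk n γ d := by
  refine ⟨2 * n, roundTrip τ, roundTripCost γ τ, rfl,
    fun j hj => starStep_roundTrip γ τ hj, fun i => ?_⟩
  obtain ⟨k, rfl⟩ := τ.surjective i
  exact ⟨2 * k + 1, by omega, roundTrip_two_mul_add_one τ k,
    (sum_range_roundTripCost γ τ k).trans_le (hτ k)⟩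

theorem stmt8_general (n : ℕ) (γ : Fin n → ℕ) (d : Fin n → ℕ) :
    ((∃ (m : ℕ) (x : ℕ → Option (Fin n)) (c : ℕ → ℕ),
        x 0 = none ∧
        (∀ j < m, StarStep n γ (x j) (x (j + 1)) (c j)) ∧
        (∀ i : Fin n, ∃ j ≤ m, x j = some i ∧ (∑ l ∈ Finset.range j, c l) ≤ d i)) ↔
      ∃ τ : Equiv.Perm (Fin n),
        (∀ i j : Fin n, i ≤ j → d (τ i) + γ (τ i) ≤ d (τ j) + γ (τ j)) ∧
        (∀ k : Fin n, γ (τ k) + 2 * ∑ j ∈ Finset.Iio k, γ (τ j) ≤ d (τ k))) ∧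
    ((∃ (m : ℕ) (x : ℕ → Option (Fin n)) (c : ℕ → ℕ),
        x 0 = none ∧
        (∀ j < m, StarStep n γ (x j) (x (j + 1)) (c j)) ∧
        (∀ i : Fin n, ∃ j ≤ m, x j = some i ∧ (∑ l ∈ Finset.range j, c l) ≤ d i)) ↔
      ∀ τ : Equiv.Perm (Fin n),
        (∀ i j : Fin n, i ≤ j → d (τ i) + γ (τ i) ≤ d (τ j) + γ (τ j)) →
        (∀ k : Fin n, γ (τ k) + 2 * ∑ j ∈ Finset.Iio k, γ (τ j) ≤ d (τ k))) := by
  let edd := Tuple.sort (d + γ)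
  have hedd : Monotone fun k => d (edd k) + γ (edd k) := Tuple.monotone_sort (d + γ)
  change (ExistsTimelyWalk n γ d ↔ _) ∧ (ExistsTimelyWalk n γ d ↔ _)
  exact ⟨⟨fun hw => ⟨edd, hedd, hw.edd_bound edd hedd⟩,
      fun ⟨τ, _, hτ⟩ => existsTimelyWalk_of_bound τ hτ⟩,
    ⟨fun hw τ hτ => hw.edd_bound τ hτ, fun h => existsTimelyWalk_of_bound edd (h edd hedd)⟩⟩

/-- On a SIMPLE-STAR instance, a walk from the center visiting every leaf `tᵢ` within its
deadline `dᵢ` exists iff for some — equivalently, for every — permutation `τ` ordering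
the leaves by nondecreasing `dᵢ + γᵢ` (the Earliest Due Date order) one has
`γ_{τ(k)} + 2·Σ_{j<k} γ_{τ(j)} ≤ d_{τ(k)}` for every `k`. -/
theorem stmt8 (n : ℕ) (γ : Fin n → ℕ) (hγ : ∀ i, 0 < γ i) (d : Fin n → ℕ) :
    ((∃ (m : ℕ) (x : ℕ → Option (Fin n)) (c : ℕ → ℕ),
        x 0 = none ∧
        (∀ j < m, StarStep n γ (x j) (x (j + 1)) (c j)) ∧
        (∀ i : Fin n, ∃ j ≤ m, x j = some i ∧ (∑ l ∈ Finset.range j, c l) ≤ d i)) ↔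
      ∃ τ : Equiv.Perm (Fin n),
        (∀ i j : Fin n, i ≤ j → d (τ i) + γ (τ i) ≤ d (τ j) + γ (τ j)) ∧
        (∀ k : Fin n, γ (τ k) + 2 * ∑ j ∈ Finset.Iio k, γ (τ j) ≤ d (τ k))) ∧
    ((∃ (m : ℕ) (x : ℕ → Option (Fin n)) (c : ℕ → ℕ),
        x 0 = none ∧
        (∀ j < m, StarStep n γ (x j) (x (j + 1)) (c j)) ∧
        (∀ i : Fin n, ∃ j ≤ m, x j = some i ∧ (∑ l ∈ Finset.range j, c l) ≤ d i)) ↔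
      ∀ τ : Equiv.Perm (Fin n),
        (∀ i j : Fin n, i ≤ j → d (τ i) + γ (τ i) ≤ d (τ j) + γ (τ j)) →
        (∀ k : Fin n, γ (τ k) + 2 * ∑ j ∈ Finset.Iio k, γ (τ j) ≤ d (τ k))) :=
  stmt8_general n γ d
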